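/- arXiv:2412.20736 — 2 statements merged into one kernel-verified Lean document; each statement's English description precedes it below -/
import Mathlib

section
/- Let L_u, L_e ∈ ℕ be positive, and let p_th = L_u / (L_e(L_e−1) + L_u L_e + L_u²). Then for all 0 < p < p_th with L_e p < 1, we have L_e(L_e−1)p² / (1 − L_e p) < L_u p (1−p)^{L_u − 1}. -/
/-! Below the threshold, Bernoulli's inequality `(1 - p)^(L_u - 1) ≥ 1 - (L_u - 1) p` and
`(1 - x)(1 - y) ≥ 1 - x - y` reduce the claim, after clearing the denominator `1 - L_e p`, to
`p (L_e(L_e - 1) + L_u L_e + L_u² - L_u) < L_u`, which is weaker than `p < p_th`. -/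

theorem one_sub_mul_le_one_sub_pow {p : ℝ} (hp : p ≤ 2) (n : ℕ) : 1 - n * p ≤ (1 - p) ^ n := by
  simpa [sub_eq_add_neg] using one_add_mul_le_pow (a := -p) (by linarith) n

theorem one_sub_pred_mul_le_one_sub_pow_pred {n : ℕ} (hn : 0 < n) {p : ℝ} (hp : p ≤ 2) :
    1 - ((n : ℝ) - 1) * p ≤ (1 - p) ^ (n - 1) := by
  simpa [Nat.cast_sub hn] using one_sub_mul_le_one_sub_pow hp (n - 1)

theorem mul_sub_one_mul_sq_lt_of_mul_lt {a b p : ℝ} (ha : 1 ≤ a) (hb : 0 ≤ b) (hp : 0 < p)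
    (h : p * (b * (b - 1) + a * b + a ^ 2) < a) :
    b * (b - 1) * p ^ 2 < a * p * ((1 - (a - 1) * p) * (1 - b * p)) := by
  have hcross : 0 ≤ a * (a - 1) * b * p ^ 3 := by
    have : 0 ≤ a - 1 := by linarith
    positivity
  have hgap : 0 < p * (a - p * (b * (b - 1) + a * b + a ^ 2)) := mul_pos hp (sub_pos.2 h)
  nlinarith [mul_pos (by linarith : (0 : ℝ) < a) (pow_pos hp 2)]

/-- Core inequality of the threshold theorem for demonstrating fault-tolerance with an
error-detection code: below the threshold
`p_th = L_u / (L_e(L_e−1) + L_u L_e + L_u²)`, the (bound on the) conditional probability of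
an accepted logical error in the encoded circuit is strictly smaller than the probability of
exactly one error in the unencoded circuit. -/
theorem threshold_inequality (Lu Le : ℕ) (hLu : 0 < Lu) (hLe : 0 < Le) {p : ℝ}
    (hp0 : 0 < p)
    (hpth : p < (Lu : ℝ) / ((Le : ℝ) * ((Le : ℝ) - 1) + (Lu : ℝ) * Le + (Lu : ℝ) ^ 2))
    (hLep : (Le : ℝ) * p < 1) :
    (Le : ℝ) * ((Le : ℝ) - 1) * p ^ 2 / (1 - (Le : ℝ) * p)
      < (Lu : ℝ) * p * (1 - p) ^ (Lu - 1) := by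
  have hLe1 : (1 : ℝ) ≤ Le := by exact_mod_cast hLe
  have hLu1 : (1 : ℝ) ≤ Lu := by exact_mod_cast hLu
  have hp1 : p ≤ 2 := by linarith [le_mul_of_one_le_left hp0.le hLe1]
  have hden : 0 < 1 - (Le : ℝ) * p := by linarith
  have hD : (0 : ℝ) < Le * (Le - 1) + Lu * Le + Lu ^ 2 := by
    have : (0 : ℝ) ≤ Le - 1 := by linarith
    positivity
  rw [div_lt_iff₀ hden]
  calc (Le : ℝ) * (Le - 1) * p ^ 2
      < Lu * p * ((1 - (Lu - 1) * p) * (1 - Le * p)) :=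
        mul_sub_one_mul_sq_lt_of_mul_lt hLu1 (by positivity) hp0 ((lt_div_iff₀ hD).mp hpth)
    _ ≤ Lu * p * ((1 - p) ^ (Lu - 1) * (1 - Le * p)) := by
        gcongr
        exact one_sub_pred_mul_le_one_sub_pow_pred hLu hp1
    _ = Lu * p * (1 - p) ^ (Lu - 1) * (1 - Le * p) := by ring
end

section
/- Define the binary entropy h(p) = −p log₂ p − (1−p) log₂(1−p) for p ∈ [0,1] (with 0 log 0 = 0). For d ≥ 2 an integer, define the Holevo capacity of the depolarizing-type channel family C_H(p) = log₂ d + (1 − pd/(d+1)) log₂(1 − pd/(d+1)) + (pd/(d+1)) log₂(dp/(d²−1)) and the entanglement-assisted capacity C_ea(p) = log₂ d² + (1−p) log₂(1−p) + p log₂(p/(d²−1)), for p ∈ (0,1). Then lim_{p → (d²−1)/d²} C_ea(p)/C_H(p) = d+1. -/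
/-!
Up to the factor `log 2`, both capacities are values of
`klUniform N x = log N + (1 - x) log (1 - x) + x log (x / (N - 1))`, the relative entropy of the
distribution `(1 - x, x/(N-1), …, x/(N-1))` on `N` points from the uniform one:
`C_ea(p) = klUniform (d²) p` and `C_H(p) = klUniform d (p d/(d+1))`. Each `klUniform N` has a double
zero at `x = (N - 1)/N` with second derivative `N²/(N - 1)`, and `p ↦ p d/(d+1)` maps
`(d² - 1)/d²` to `(d - 1)/d`. Two applications of L'Hôpital's rule give the limit
`(d⁴/(d² - 1)) / ((d/(d+1))² · d²/(d - 1)) = d + 1`.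
-/

/-- Holevo capacity of the depolarizing-type channel family (base-2 logarithms). -/
noncomputable def CH (d : ℕ) (p : ℝ) : ℝ :=
  Real.logb 2 d + (1 - p * d / (d + 1)) * Real.logb 2 (1 - p * d / (d + 1))
    + (p * d / (d + 1)) * Real.logb 2 (d * p / ((d : ℝ) ^ 2 - 1))

/-- Entanglement-assisted capacity of the depolarizing-type channel family. -/
noncomputable def Cea (d : ℕ) (p : ℝ) : ℝ :=
  Real.logb 2 ((d : ℝ) ^ 2) + (1 - p) * Real.logb 2 (1 - p)
    + p * Real.logb 2 (p / ((d : ℝ) ^ 2 - 1))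

open Real Filter Topology

theorem tendsto_div_nhdsNE_of_double_zero {f g f' g' f'' g'' : ℝ → ℝ} {a : ℝ}
    (hf : ∀ᶠ x in 𝓝 a, HasDerivAt f (f' x) x) (hg : ∀ᶠ x in 𝓝 a, HasDerivAt g (g' x) x)
    (hf' : ∀ᶠ x in 𝓝 a, HasDerivAt f' (f'' x) x) (hg' : ∀ᶠ x in 𝓝 a, HasDerivAt g' (g'' x) x)
    (hfa : f a = 0) (hga : g a = 0) (hf'a : f' a = 0) (hg'a : g' a = 0)
    (hf''a : ContinuousAt f'' a) (hg''a : ContinuousAt g'' a) (hg''a_ne : g'' a ≠ 0) :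
    Tendsto (fun x => f x / g x) (𝓝[≠] a) (𝓝 (f'' a / g'' a)) := by
  have tendsto_zero {φ φ' : ℝ → ℝ} (h : ∀ᶠ x in 𝓝 a, HasDerivAt φ (φ' x) x) (h₀ : φ a = 0) :
      Tendsto φ (𝓝[≠] a) (𝓝 0) :=
    h₀ ▸ h.self_of_nhds.continuousAt.tendsto.mono_left nhdsWithin_le_nhds
  have hg''_ne : ∀ᶠ x in 𝓝[≠] a, g'' x ≠ 0 :=
    (hg''a.eventually_ne hg''a_ne).filter_mono nhdsWithin_le_nhds
  have hg'_ne : ∀ᶠ x in 𝓝[≠] a, g' x ≠ 0 := hg'a ▸ hg'.self_of_nhds.eventually_ne hg''a_ne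
  have hlim' : Tendsto (fun x => f' x / g' x) (𝓝[≠] a) (𝓝 (f'' a / g'' a)) :=
    HasDerivAt.lhopital_zero_nhdsNE (hf'.filter_mono nhdsWithin_le_nhds)
      (hg'.filter_mono nhdsWithin_le_nhds) hg''_ne (tendsto_zero hf' hf'a) (tendsto_zero hg' hg'a)
      ((hf''a.div hg''a hg''a_ne).tendsto.mono_left nhdsWithin_le_nhds)
  exact HasDerivAt.lhopital_zero_nhdsNE (hf.filter_mono nhdsWithin_le_nhds)
    (hg.filter_mono nhdsWithin_le_nhds) hg'_ne (tendsto_zero hf hfa) (tendsto_zero hg hga) hlim'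

noncomputable def klUniform (N x : ℝ) : ℝ :=
  log N + (1 - x) * log (1 - x) + x * log (x / (N - 1))

noncomputable def klUniformDeriv (N x : ℝ) : ℝ :=
  log (x / (N - 1)) - log (1 - x)

section
variable {N x : ℝ}

theorem klUniform_eq_zero (hN : N ≠ 0) : klUniform N ((N - 1) / N) = 0 := by
  rcases eq_or_ne N 1 with rfl | hN₁
  · simp [klUniform]
  have h₁ : 1 - (N - 1) / N = N⁻¹ := by field_simp; ring
  have h₂ : (N - 1) / N / (N - 1) = N⁻¹ := by field_simp [sub_ne_zero.2 hN₁]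
  rw [klUniform, h₁, h₂, log_inv]
  field_simp
  ring

theorem klUniformDeriv_eq_zero (hN : N ≠ 0) (hN₁ : N ≠ 1) :
    klUniformDeriv N ((N - 1) / N) = 0 := by
  have h₁ : 1 - (N - 1) / N = N⁻¹ := by field_simp; ring
  have h₂ : (N - 1) / N / (N - 1) = N⁻¹ := by field_simp [sub_ne_zero.2 hN₁]
  rw [klUniformDeriv, h₁, h₂, sub_self]

theorem hasDerivAt_klUniform (hN : N ≠ 1) (hx₀ : x ≠ 0) (hx₁ : x ≠ 1) :
    HasDerivAt (klUniform N) (klUniformDeriv N x) x := by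
  have h₁ : 1 - x ≠ 0 := sub_ne_zero.2 hx₁.symm
  have hlog₁ := ((hasDerivAt_id' x).const_sub 1).log h₁
  have hlog₂ := ((hasDerivAt_id' x).div_const (N - 1)).log (div_ne_zero hx₀ (sub_ne_zero.2 hN))
  refine ((((hasDerivAt_id' x).const_sub 1).mul hlog₁).const_add (log N)).add
    ((hasDerivAt_id' x).mul hlog₂) |>.congr_deriv ?_
  rw [klUniformDeriv]
  field_simp
  ring

theorem hasDerivAt_klUniformDeriv (hN : N ≠ 1) (hx₀ : x ≠ 0) (hx₁ : x ≠ 1) :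
    HasDerivAt (klUniformDeriv N) (x⁻¹ + (1 - x)⁻¹) x := by
  have h₁ : 1 - x ≠ 0 := sub_ne_zero.2 hx₁.symm
  refine (((hasDerivAt_id' x).div_const (N - 1)).log (div_ne_zero hx₀ (sub_ne_zero.2 hN))).sub
    (((hasDerivAt_id' x).const_sub 1).log h₁) |>.congr_deriv ?_
  field_simp
  ring

theorem inv_add_inv_one_sub_sub_one_div (hN : N ≠ 0) (hN₁ : N ≠ 1) :
    ((N - 1) / N)⁻¹ + (1 - (N - 1) / N)⁻¹ = N ^ 2 / (N - 1) := by
  have : N - 1 ≠ 0 := sub_ne_zero.2 hN₁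
  field_simp
  ring

theorem eventually_ne_zero_and_ne_one_nhds_sub_one_div (hN : 1 < N) :
    ∀ᶠ y in 𝓝 ((N - 1) / N), y ≠ 0 ∧ y ≠ 1 := by
  have h₀ : 0 < (N - 1) / N := div_pos (by linarith) (by linarith)
  have h₁ : (N - 1) / N < 1 := (div_lt_one (by linarith)).2 (by linarith)
  filter_upwards [Ioo_mem_nhds h₀ h₁] with y hy using ⟨hy.1.ne', hy.2.ne⟩

end

theorem tendsto_klUniform_div_klUniform_mul {M N c : ℝ} (hM : 1 < M) (hN : 1 < N)
    (hc : (M - 1) / M * c = (N - 1) / N) :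
    Tendsto (fun p => klUniform M p / klUniform N (p * c)) (𝓝[≠] ((M - 1) / M))
      (𝓝 (M ^ 2 / (M - 1) / (c ^ 2 * (N ^ 2 / (N - 1))))) := by
  have continuousAt_second {y : ℝ} (hy : y ≠ 0 ∧ y ≠ 1) :
      ContinuousAt (fun x : ℝ => x⁻¹ + (1 - x)⁻¹) y :=
    (continuousAt_inv₀ hy.1).add
      ((continuousAt_const.sub continuousAt_id).inv₀ (sub_ne_zero.2 hy.2.symm))
  have hxM := eventually_ne_zero_and_ne_one_nhds_sub_one_div hM
  have hxN := eventually_ne_zero_and_ne_one_nhds_sub_one_div hN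
  have hc₀ : c ≠ 0 := by
    rintro rfl
    exact hxN.self_of_nhds.1 (by simpa using hc.symm)
  have hmul : ContinuousAt (· * c) ((M - 1) / M) := (continuous_mul_const c).continuousAt
  have hxN' : ∀ᶠ p in 𝓝 ((M - 1) / M), p * c ≠ 0 ∧ p * c ≠ 1 :=
    hmul.tendsto.eventually (hc ▸ hxN)
  have key := tendsto_div_nhdsNE_of_double_zero
    (hxM.mono fun y hy => hasDerivAt_klUniform hM.ne' hy.1 hy.2)
    (hxN'.mono fun p hp => (hasDerivAt_klUniform hN.ne' hp.1 hp.2).comp p (hasDerivAt_mul_const c))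
    (hxM.mono fun y hy => hasDerivAt_klUniformDeriv hM.ne' hy.1 hy.2)
    (hxN'.mono fun p hp =>
      ((hasDerivAt_klUniformDeriv hN.ne' hp.1 hp.2).comp p (hasDerivAt_mul_const c)).mul_const c)
    (klUniform_eq_zero (by linarith))
    (by rw [Function.comp_apply, hc]; exact klUniform_eq_zero (by linarith))
    (klUniformDeriv_eq_zero (by linarith) hM.ne')
    (by rw [Function.comp_apply, hc, klUniformDeriv_eq_zero (by linarith) hN.ne', zero_mul])
    (continuousAt_second hxM.self_of_nhds)
    ((((continuousAt_second hxN.self_of_nhds).comp_of_eq hmul hc).mul_const c).mul_const c)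
    (by
      rw [Function.comp_apply, hc, inv_add_inv_one_sub_sub_one_div (by linarith) hN.ne']
      exact mul_ne_zero (mul_ne_zero (div_ne_zero (by positivity) (by linarith)) hc₀) hc₀)
  rw [inv_add_inv_one_sub_sub_one_div (by linarith) hM.ne', Function.comp_apply, hc,
    inv_add_inv_one_sub_sub_one_div (by linarith) hN.ne'] at key
  rwa [show c ^ 2 * (N ^ 2 / (N - 1)) = N ^ 2 / (N - 1) * c * c by ring]

theorem Cea_eq_klUniform (d : ℕ) (p : ℝ) : Cea d p = klUniform ((d : ℝ) ^ 2) p / log 2 := by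
  simp only [Cea, klUniform, logb]
  ring

theorem CH_eq_klUniform (d : ℕ) (p : ℝ) :
    CH d p = klUniform d (p * (d / (d + 1))) / log 2 := by
  have harg : (d : ℝ) * p / ((d : ℝ) ^ 2 - 1) = p * (d / (d + 1)) / (d - 1) := by
    rw [← mul_div_assoc, div_div, mul_comm p]
    ring
  simp only [CH, klUniform, logb, harg, mul_div_assoc]
  ring

/-- As `p → (d²−1)/d²` (the completely depolarizing point), the ratio of the
entanglement-assisted capacity to the Holevo capacity tends to `d + 1`. -/
theorem tendsto_ratio_depolarizing (d : ℕ) (hd : 2 ≤ d) :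
    Filter.Tendsto (fun p : ℝ => Cea d p / CH d p)
      (nhdsWithin (((d : ℝ) ^ 2 - 1) / (d : ℝ) ^ 2) {((d : ℝ) ^ 2 - 1) / (d : ℝ) ^ 2}ᶜ)
      (nhds ((d : ℝ) + 1)) := by
  have hd' : (2 : ℝ) ≤ d := by exact_mod_cast hd
  have hratio : (fun p => Cea d p / CH d p)
      = fun p => klUniform ((d : ℝ) ^ 2) p / klUniform d (p * (d / (d + 1))) := by
    funext p
    rw [Cea_eq_klUniform, CH_eq_klUniform, div_div_div_cancel_right₀ (log_pos one_lt_two).ne']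
  have hc : ((d : ℝ) ^ 2 - 1) / (d : ℝ) ^ 2 * (d / (d + 1)) = (d - 1) / d := by
    field_simp
    ring
  have hlim : ((d : ℝ) ^ 2) ^ 2 / ((d : ℝ) ^ 2 - 1)
      / ((d / (d + 1)) ^ 2 * ((d : ℝ) ^ 2 / (d - 1))) = d + 1 := by
    have : (d : ℝ) - 1 ≠ 0 := by linarith
    have : (d : ℝ) ^ 2 - 1 ≠ 0 := by nlinarith
    field_simp
    ring
  have key := tendsto_klUniform_div_klUniform_mul (by nlinarith) (by linarith) hc
  rwa [hlim, ← hratio] at key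
end
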